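/- arXiv:1202.3276 — 3 statements merged into one kernel-verified Lean document; each statement's English description precedes it below -/
import Mathlib

section
/- Let Γ be a connected, locally finite graph, let S ⊆ V(Γ) be a finite set of vertices, and let k ≥ 1. Then there are only finitely many k-cuts C of Γ with βC ∩ S ≠ ∅. -/
open Pointwise

universe u

namespace CFGroups

variable {V : Type u}

/-- The edge boundary of `C`: adjacent ordered pairs `(u,v)` with `u ∈ C`, `v ∉ C`.
These are in canonical bijection with the undirected edges of `δC`. -/
def edgeBoundary (G : SimpleGraph V) (C : Set V) : Set (V × V) :=
  {p : V × V | G.Adj p.1 p.2 ∧ p.1 ∈ C ∧ p.2 ∉ C}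

/-- The vertex boundary `βC`: endpoints of edges of `δC`. -/
def vertexBoundary (G : SimpleGraph V) (C : Set V) : Set V :=
  {u : V | ∃ v : V, G.Adj u v ∧ ((u ∈ C ∧ v ∉ C) ∨ (v ∈ C ∧ u ∉ C))}

/-- A cut: `C` and its complement are nonempty and connected, and `δC` is finite. -/
def IsCut (G : SimpleGraph V) (C : Set V) : Prop :=
  C.Nonempty ∧ Cᶜ.Nonempty ∧ (G.induce C).Connected ∧ (G.induce Cᶜ).Connected ∧
    (edgeBoundary G C).Finite

/-- The weight `|δC|` of a cut. -/
noncomputable def weight (G : SimpleGraph V) (C : Set V) : ℕ :=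
  (edgeBoundary G C).ncard

/-- A `k`-cut: a cut of weight at most `k`. -/
def IsCutLe (G : SimpleGraph V) (k : ℕ) (C : Set V) : Prop :=
  IsCut G C ∧ weight G C ≤ k

/-- Two cuts are nested. -/
def Nested (C D : Set V) : Prop :=
  C ⊆ D ∨ C ⊆ Dᶜ ∨ Cᶜ ⊆ D ∨ Cᶜ ⊆ Dᶜ

/-- A bi-infinite simple path, as an injective `ℤ`-indexed sequence of successively
adjacent vertices. -/
def IsBiInfinitePath (G : SimpleGraph V) (α : ℤ → V) : Prop :=
  Function.Injective α ∧ ∀ i : ℤ, G.Adj (α i) (α (i + 1))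

/-- A one-sided infinite simple path. -/
def IsRayPath (G : SimpleGraph V) (γ : ℕ → V) : Prop :=
  Function.Injective γ ∧ ∀ i : ℕ, G.Adj (γ i) (γ (i + 1))

/-- `C(α)`: the cuts splitting the bi-infinite simple path `α` into two infinite pieces. -/
def cutsSplitting (G : SimpleGraph V) (α : ℤ → V) : Set (Set V) :=
  {C : Set V | IsCut G C ∧ (Set.range α ∩ C).Infinite ∧ (Set.range α ∩ Cᶜ).Infinite}

/-- `C_min(α)`: the cuts of minimal weight in `C(α)`. -/
def cutsMin (G : SimpleGraph V) (α : ℤ → V) : Set (Set V) :=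
  {C ∈ cutsSplitting G α | ∀ D ∈ cutsSplitting G α, weight G C ≤ weight G D}

/-- `Γ` is accessible with constant `k`: every bi-infinite simple path with `C(α) ≠ ∅`
admits a `k`-cut in `C(α)`. -/
def AccessibleWith (G : SimpleGraph V) (k : ℕ) : Prop :=
  ∀ α : ℤ → V, IsBiInfinitePath G α → (cutsSplitting G α).Nonempty →
    ∃ C ∈ cutsSplitting G α, weight G C ≤ k

/-- An accessible graph. -/
def Accessible (G : SimpleGraph V) : Prop := ∃ k : ℕ, AccessibleWith G k

/-- `m(C)`: the number of `k`-cuts not nested with `C`. -/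
noncomputable def mdeg (G : SimpleGraph V) (k : ℕ) (C : Set V) : ℕ :=
  Set.ncard {D : Set V | IsCutLe G k D ∧ ¬ Nested C D}

/-- `C_opt(α)`: the cuts of `C_min(α)` minimizing `m`. -/
def cutsOpt (G : SimpleGraph V) (k : ℕ) (α : ℤ → V) : Set (Set V) :=
  {C ∈ cutsMin G α | ∀ D ∈ cutsMin G α, mdeg G k C ≤ mdeg G k D}

/-- `C_opt`: the optimally nested cuts. -/
def COpt (G : SimpleGraph V) (k : ℕ) : Set (Set V) :=
  {C : Set V | ∃ α : ℤ → V, IsBiInfinitePath G α ∧ C ∈ cutsOpt G k α}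

/-- The relation `C ∼ D` on optimal cuts. -/
def SimRel (G : SimpleGraph V) (k : ℕ) (C D : Set V) : Prop :=
  C = D ∨ (Cᶜ ⊂ D ∧ ∀ E ∈ COpt G k, Cᶜ ⊂ E → E ⊆ D → E = D)

/-- The equivalence class `[C]` of an optimal cut `C` under `∼`. -/
def cls (G : SimpleGraph V) (k : ℕ) (C : Set V) : Set (Set V) :=
  {D ∈ COpt G k | SimRel G k C D}

/-- The structure tree `T(C_opt)`: vertices are the classes `[C]`, `C ∈ C_opt`, and for each
`C ∈ C_opt` there is an edge joining `[C]` and `[C*]`. -/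
def structureTree (G : SimpleGraph V) (k : ℕ) :
    SimpleGraph {S : Set (Set V) // ∃ C ∈ COpt G k, S = cls G k C} where
  Adj X Y := X ≠ Y ∧ ∃ C ∈ COpt G k,
    (X.1 = cls G k C ∧ Y.1 = cls G k Cᶜ) ∨ (Y.1 = cls G k C ∧ X.1 = cls G k Cᶜ)
  symm := ⟨by
    rintro X Y ⟨hne, C, hC, h⟩
    exact ⟨hne.symm, C, hC, h.symm⟩⟩
  loopless := ⟨fun X h => h.1 rfl⟩

/-- A locally finite graph. -/
def LocallyFiniteGraph (G : SimpleGraph V) : Prop :=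
  ∀ v : V, (G.neighborSet v).Finite

/-- The `r`-th neighbourhood `N^r S` of a set of vertices. -/
def nbhd (G : SimpleGraph V) (r : ℕ) (S : Set V) : Set V :=
  {v : V | ∃ u ∈ S, G.dist v u ≤ r}

/-- The block `B[C] = ⋂_{D ∼ C} N^κ D` assigned to the vertex `[C]` of the structure tree. -/
def block (G : SimpleGraph V) (k κ : ℕ) (C : Set V) : Set V :=
  ⋂ D ∈ cls G k C, nbhd G κ D

/-- `Aut(Γ)\Γ` is finite: the automorphism group of `Γ` acts with finitely many
vertex orbits and finitely many edge orbits. -/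
def AutFinOrbits (G : SimpleGraph V) : Prop :=
  (Set.range fun v : V => Set.range fun φ : G ≃g G => φ v).Finite ∧
  (Set.range fun e : G.edgeSet => Set.range fun φ : G ≃g G => Sym2.map ⇑φ e.1).Finite

/-- A group `H` (equipped with an action on the vertices) acts on the graph `G`
by graph automorphisms. -/
def ActsOn (G : SimpleGraph V) (H : Type u) [Group H] [MulAction H V] : Prop :=
  ∀ (g : H) (u v : V), G.Adj u v ↔ G.Adj (g • u) (g • v)

/-- `G\Γ` is finite: finitely many vertex orbits and finitely many edge orbits. -/
def ActFinOrbits (G : SimpleGraph V) (H : Type u) [Group H] [MulAction H V] : Prop :=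
  (Set.range fun v : V => Set.range fun g : H => g • v).Finite ∧
  (Set.range fun e : G.edgeSet => Set.range fun g : H => Sym2.map (fun v => g • v) e.1).Finite

/-- The graph has more than one end: some finite vertex set can be removed so that at least
two infinite connected components remain. -/
def MoreThanOneEnd (G : SimpleGraph V) : Prop :=
  ∃ S : Set V, S.Finite ∧ ∃ K₁ K₂ : (G.induce Sᶜ).ConnectedComponent,
    K₁ ≠ K₂ ∧ K₁.supp.Infinite ∧ K₂.supp.Infinite

/-- The Cayley graph of a group w.r.t. a generating set `S` (edges labelled by `S ∪ S⁻¹`). -/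
def cayleyGraph (K : Type u) [Group K] (S : Set K) : SimpleGraph K where
  Adj g h := g ≠ h ∧ (g⁻¹ * h ∈ S ∨ h⁻¹ * g ∈ S)
  symm := ⟨by rintro g h ⟨hne, hs⟩; exact ⟨hne.symm, hs.symm⟩⟩
  loopless := ⟨fun g h => h.1 rfl⟩

/-- A finitely generated group all of whose Cayley graphs have at most one end. -/
def FGOneEnded (K : Type u) [Group K] : Prop :=
  Group.FG K ∧ ∀ S : Set K, S.Finite → Subgroup.closure S = ⊤ →
    ¬ MoreThanOneEnd (cayleyGraph K S)

/-- An accessible group: it acts on a tree with finitely many orbits, finite edge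
stabilizers, and all vertex stabilizers finitely generated with at most one end. -/
def GroupAccessible (K : Type u) [Group K] : Prop :=
  ∃ (T : Type u) (tr : SimpleGraph T) (φ : K →* Equiv.Perm T),
    tr.IsTree ∧
    (∀ (g : K) (u v : T), tr.Adj u v ↔ tr.Adj (φ g u) (φ g v)) ∧
    (Set.range fun t : T => Set.range fun g : K => φ g t).Finite ∧
    (Set.range fun e : tr.edgeSet => Set.range fun g : K => Sym2.map ⇑(φ g) e.1).Finite ∧
    (∀ e ∈ tr.edgeSet, {g : K | Sym2.map ⇑(φ g) e = e}.Finite) ∧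
    (∀ t : T, ∃ L : Subgroup K, (L : Set K) = {g : K | φ g t = t} ∧ FGOneEnded ↥L)

/-- A tree decomposition of `G`. -/
def IsTreeDecomp (G : SimpleGraph V) {T : Type u} (tr : SimpleGraph T) (X : T → Set V) : Prop :=
  tr.IsTree ∧ (∀ v : V, ∃ t : T, v ∈ X t) ∧
  (∀ u v : V, G.Adj u v → ∃ t : T, u ∈ X t ∧ v ∈ X t) ∧
  (∀ v : V, (tr.induce {t : T | v ∈ X t}).Connected)

/-- `G` has treewidth at most `w`. -/
def TreewidthAtMost (G : SimpleGraph V) (w : ℕ) : Prop :=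
  ∃ (T : Type u) (tr : SimpleGraph T) (X : T → Set V),
    IsTreeDecomp G tr X ∧ ∀ t : T, (X t).Finite ∧ (X t).ncard ≤ w + 1

/-- `G` has finite treewidth. -/
def FiniteTreewidth (G : SimpleGraph V) : Prop := ∃ w : ℕ, TreewidthAtMost G w

/-- Uniformly bounded vertex degrees. -/
def UnifBoundedDegree (G : SimpleGraph V) : Prop :=
  ∃ d : ℕ, ∀ v : V, (G.neighborSet v).Finite ∧ (G.neighborSet v).ncard ≤ d

/-- A class of groups (in universe `u`), as a property of groups. -/
def VirtuallyIn (𝒢 : (K : Type u) → [inst : Group K] → Prop) (K : Type u) [Group K] : Prop :=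
  ∃ L : Subgroup K, L.FiniteIndex ∧ 𝒢 ↥L

/-- `K` has a quasi-isometric section: for some monoid presentation `π : Σ* → K` with
finite alphabet there is a section `σ` of `π` with `σ(1) = ε` which is quasi-isometric
w.r.t. the tree metric on `Σ*`; `d(u,v) ≤ k` is expressed via a common prefix
decomposition `u = p u'`, `v = p v'` with `|u'| + |v'| ≤ k`. -/
def HasQIS (K : Type u) [Group K] : Prop :=
  ∃ (A : Type u) (_ : Finite A) (π : List A → K),
    (∀ u v : List A, π (u ++ v) = π u * π v) ∧ π [] = 1 ∧ Function.Surjective π ∧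
    ∃ (σ : K → List A) (k : ℕ), 1 ≤ k ∧ σ 1 = [] ∧ (∀ g : K, π (σ g) = g) ∧
      ∀ (g : K) (a : A), ∃ p u' v' : List A,
        σ g = p ++ u' ∧ σ (g * π [a]) = p ++ v' ∧ u'.length + v'.length ≤ k

/-- A context-free group: the word problem w.r.t. some surjective monoid presentation
over a finite alphabet is a context-free language. -/
def IsContextFreeGroup (K : Type u) [Group K] : Prop :=
  ∃ (A : Type u) (_ : Finite A) (π : List A → K),
    (∀ u v : List A, π (u ++ v) = π u * π v) ∧ π [] = 1 ∧ Function.Surjective π ∧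
    Language.IsContextFree ({w : List A | π w = 1} : Language A)

end CFGroups

/-!
A cut `C` with `x ∈ C`, `y ∉ C` has a boundary edge on any fixed `x`–`y` walk, and deleting that
edge leaves `C` a cut of weight one less; when `x` and `y` are not joined, `C` is forced to be the
component of `x`. Induction on `k` thus bounds the `k`-cuts separating two given vertices, and a
`k`-cut whose vertex boundary meets `S` separates some `s ∈ S` from one of its finitely many
neighbours.
-/

namespace CFGroups

variable {V : Type u} {G : SimpleGraph V} {C : Set V} {x y u v : V}

lemma exists_dart_mem_edgeBoundary (w : G.Walk x y) (hx : x ∈ C) (hy : y ∉ C) :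
    ∃ d ∈ w.darts, (d.fst, d.snd) ∈ edgeBoundary G C := by
  obtain ⟨d, hd, hfst, hsnd⟩ := w.exists_boundary_dart C hx hy
  exact ⟨d, hd, d.adj, hfst, hsnd⟩

lemma IsCut.not_reachable_of_weight_eq_zero (hC : IsCut G C) (hw : weight G C = 0)
    (hx : x ∈ C) (hy : y ∉ C) : ¬ G.Reachable x y := by
  rintro ⟨w⟩
  obtain ⟨d, -, hd⟩ := exists_dart_mem_edgeBoundary w hx hy
  exact ((Set.ncard_pos hC.2.2.2.2).mpr ⟨_, hd⟩).ne' hw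

lemma IsCut.eq_setOf_reachable (hC : IsCut G C) (hx : x ∈ C) (hy : y ∉ C)
    (hxy : ¬ G.Reachable x y) : C = {v | G.Reachable x v} := by
  have reach_of_mem {D : Set V} (hD : (G.induce D).Connected) {a b : V} (ha : a ∈ D)
      (hb : b ∈ D) : G.Reachable a b :=
    (hD ⟨a, ha⟩ ⟨b, hb⟩).map (SimpleGraph.Embedding.induce D).toHom
  ext v
  refine ⟨reach_of_mem hC.2.2.1 hx, fun hxv => ?_⟩
  by_contra hv
  exact hxy (hxv.trans (reach_of_mem hC.2.2.2.1 hv hy))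

lemma induce_deleteEdges_singleton (hv : v ∉ C) :
    (G.deleteEdges {s(u, v)}).induce C = G.induce C := by
  ext a b
  simp only [SimpleGraph.comap_adj, Function.Embedding.subtype_apply,
    SimpleGraph.deleteEdges_adj, Set.mem_singleton_iff, and_iff_left_iff_imp]
  rintro - h
  rcases Sym2.eq_iff.mp h with ⟨-, rfl⟩ | ⟨rfl, -⟩
  · exact hv b.2
  · exact hv a.2

lemma edgeBoundary_deleteEdges_singleton (hu : u ∈ C) (hv : v ∉ C) :
    edgeBoundary (G.deleteEdges {s(u, v)}) C = edgeBoundary G C \ {(u, v)} := by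
  ext ⟨a, b⟩
  simp only [edgeBoundary, SimpleGraph.deleteEdges_adj, Set.mem_singleton_iff, Sym2.eq_iff,
    Set.mem_sdiff, Set.mem_ofPred_eq, Prod.mk.injEq]
  constructor
  · rintro ⟨⟨hab, hne⟩, ha, hb⟩
    exact ⟨⟨hab, ha, hb⟩, fun h => hne (Or.inl h)⟩
  · rintro ⟨⟨hab, ha, hb⟩, hne⟩
    refine ⟨⟨hab, ?_⟩, ha, hb⟩
    rintro (h | ⟨rfl, rfl⟩)
    · exact hne h
    · exact hv ha

lemma IsCutLe.deleteEdges_singleton {k : ℕ} (hC : IsCutLe G (k + 1) C)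
    (huv : (u, v) ∈ edgeBoundary G C) : IsCutLe (G.deleteEdges {s(u, v)}) k C := by
  obtain ⟨⟨hne, hne', hconn, hconn', hfin⟩, hw⟩ := hC
  have hu : u ∈ C := huv.2.1
  have hv : v ∉ C := huv.2.2
  refine ⟨⟨hne, hne', ?_, ?_, ?_⟩, ?_⟩
  · rwa [induce_deleteEdges_singleton hv]
  · rwa [Sym2.eq_swap, induce_deleteEdges_singleton (not_not.mpr hu)]
  · rw [edgeBoundary_deleteEdges_singleton hu hv]
    exact hfin.sdiff
  · rw [weight, edgeBoundary_deleteEdges_singleton hu hv, Set.ncard_sdiff_singleton_of_mem huv]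
    exact Nat.sub_le_of_le_add hw

lemma setOf_isCutLe_separating_subsingleton (hxy : ¬ G.Reachable x y) (k : ℕ) :
    {C : Set V | IsCutLe G k C ∧ x ∈ C ∧ y ∉ C}.Subsingleton := by
  rintro C ⟨⟨hC, -⟩, hx, hy⟩ D ⟨⟨hD, -⟩, hx', hy'⟩
  rw [hC.eq_setOf_reachable hx hy hxy, hD.eq_setOf_reachable hx' hy' hxy]

theorem setOf_isCutLe_separating_finite (k : ℕ) (G : SimpleGraph V) (x y : V) :
    {C : Set V | IsCutLe G k C ∧ x ∈ C ∧ y ∉ C}.Finite := by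
  induction k generalizing G with
  | zero =>
    by_cases hxy : G.Reachable x y
    · refine Set.finite_empty.subset fun C ⟨⟨hC, hw⟩, hx, hy⟩ => ?_
      exact hC.not_reachable_of_weight_eq_zero (Nat.le_zero.mp hw) hx hy hxy
    · exact (setOf_isCutLe_separating_subsingleton hxy 0).finite
  | succ k ih =>
    by_cases hxy : G.Reachable x y
    · obtain ⟨w⟩ := hxy
      refine ((List.finite_toSet w.darts).biUnion fun d _ =>
        ih (G.deleteEdges {s(d.fst, d.snd)})).subset ?_
      rintro C ⟨hC, hx, hy⟩
      obtain ⟨d, hd, hdC⟩ := exists_dart_mem_edgeBoundary w hx hy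
      exact Set.mem_biUnion hd ⟨hC.deleteEdges_singleton hdC, hx, hy⟩
    · exact (setOf_isCutLe_separating_subsingleton hxy _).finite

end CFGroups

open CFGroups in
theorem finitely_many_kCuts_meeting_finite_set_general
    {V : Type u} (G : SimpleGraph V)
    (hlf : CFGroups.LocallyFiniteGraph G)
    (S : Set V) (hS : S.Finite) (k : ℕ) :
    {C : Set V | CFGroups.IsCutLe G k C ∧
      (CFGroups.vertexBoundary G C ∩ S).Nonempty}.Finite := by
  have hcover : {C : Set V | IsCutLe G k C ∧ (vertexBoundary G C ∩ S).Nonempty} ⊆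
      ⋃ s ∈ S, ⋃ v ∈ G.neighborSet s,
        {C | IsCutLe G k C ∧ s ∈ C ∧ v ∉ C} ∪ {C | IsCutLe G k C ∧ v ∈ C ∧ s ∉ C} := by
    rintro C ⟨hC, s, ⟨v, hsv, hsC | hvC⟩, hs⟩
    · exact Set.mem_biUnion hs (Set.mem_biUnion hsv (Or.inl ⟨hC, hsC⟩))
    · exact Set.mem_biUnion hs (Set.mem_biUnion hsv (Or.inr ⟨hC, hvC⟩))
  refine (hS.biUnion fun s _ => (hlf s).biUnion fun v _ => ?_).subset hcover
  exact (setOf_isCutLe_separating_finite k G s v).union (setOf_isCutLe_separating_finite k G v s)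

open CFGroups in
/-- In a connected, locally finite graph, for finite `S` and `k ≥ 1`
there are only finitely many `k`-cuts `C` with `βC ∩ S ≠ ∅`. -/
theorem finitely_many_kCuts_meeting_finite_set
    {V : Type u} (G : SimpleGraph V) (hconn : G.Connected)
    (hlf : CFGroups.LocallyFiniteGraph G)
    (S : Set V) (hS : S.Finite) (k : ℕ) (hk : 1 ≤ k) :
    {C : Set V | CFGroups.IsCutLe G k C ∧
      (CFGroups.vertexBoundary G C ∩ S).Nonempty}.Finite :=
  finitely_many_kCuts_meeting_finite_set_general G hlf S hS k
end

section
/- Let Γ be a connected, locally finite graph, let k ∈ ℕ, and let C be a cut of Γ. Then the set of k-cuts D of Γ that are not nested with C is finite. -/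
open Pointwise

universe u

/-!
If `D` is not nested with `C`, the connected sides `D` and `D*` each meet both `C` and `C*`, so
each of them contains the tail of an edge of the finite set `δC`. Fixing a walk inside `C` between
any two such tails gives a finite set of edges, one of which must lie in `δD`. It then suffices
that each edge lies in the boundary of only finitely many `k`-cuts. This is a compactness
argument: along a non-principal ultrafilter on infinitely many such cuts, the limit `F` of their
boundaries has at most `k` edges. If the edge `(u, v)` is not separated by removing `F`, a walk
from `u` to `v` avoiding `F` avoids almost every boundary, which is impossible; otherwise almost
every cut equals the component of `u` in `Γ - F`.
-/

namespace Filter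

theorem finite_setOf_eventually_mem {ι α : Type*} {l : Filter ι} [l.NeBot] {s : ι → Set α}
    {k : ℕ} (hs : ∀ᶠ i in l, (s i).Finite ∧ (s i).ncard ≤ k) :
    {a | ∀ᶠ i in l, a ∈ s i}.Finite := by
  by_contra hinf
  obtain ⟨T, hT, hTfin, hTcard⟩ := Set.Infinite.exists_subset_ncard_eq hinf (k + 1)
  have hTs : ∀ᶠ i in l, T ⊆ s i := (eventually_all_finite hTfin).2 fun a ha => hT ha
  obtain ⟨i, ⟨hfin, hcard⟩, hTi⟩ := (hs.and hTs).exists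
  have := Set.ncard_le_ncard hTi hfin
  omega

end Filter

namespace CFGroups

open SimpleGraph

variable {V : Type u} {G : SimpleGraph V}

theorem exists_fst_mem_edgeBoundary {C D : Set V} (hD : (G.induce D).Preconnected) {x y : V}
    (hxD : x ∈ D) (hyD : y ∈ D) (hxC : x ∈ C) (hyC : y ∉ C) :
    ∃ e ∈ edgeBoundary G C, e.1 ∈ D := by
  obtain ⟨p⟩ := hD ⟨x, hxD⟩ ⟨y, hyD⟩
  obtain ⟨d, -, hd₁, hd₂⟩ := p.exists_boundary_dart (Subtype.val ⁻¹' C) hxC hyC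
  exact ⟨(d.fst, d.snd), ⟨d.adj, hd₁, hd₂⟩, d.fst.2⟩

theorem exists_fst_edgeBoundary_mem_not_mem_of_not_nested {C D : Set V} (hD : IsCut G D)
    (hCD : ¬ Nested C D) :
    ∃ p ∈ Prod.fst '' edgeBoundary G C, ∃ q ∈ Prod.fst '' edgeBoundary G C,
      p ∈ D ∧ q ∉ D := by
  simp only [Nested, not_or, Set.not_subset, Set.mem_compl_iff, not_not] at hCD
  obtain ⟨⟨x₁, hx₁C, hx₁D⟩, ⟨x₂, hx₂C, hx₂D⟩, ⟨x₃, hx₃C, hx₃D⟩, ⟨x₄, hx₄C, hx₄D⟩⟩ :=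
    hCD
  obtain ⟨e, he, heD⟩ :=
    exists_fst_mem_edgeBoundary hD.2.2.1.preconnected hx₂D hx₄D hx₂C hx₄C
  obtain ⟨e', he', he'D⟩ :=
    exists_fst_mem_edgeBoundary hD.2.2.2.1.preconnected hx₁D hx₃D hx₁C hx₃C
  exact ⟨e.1, ⟨e, he, rfl⟩, e'.1, ⟨e', he', rfl⟩, heD, he'D⟩

theorem exists_finite_forall_exists_mem_edgeBoundary {S : Set V} (hS : S.Finite)
    (hreach : ∀ p ∈ S, ∀ q ∈ S, G.Reachable p q) :
    ∃ F : Set (V × V), F.Finite ∧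
      ∀ D : Set V, ∀ p ∈ S, ∀ q ∈ S, p ∈ D → q ∉ D →
        ∃ e ∈ F, e ∈ edgeBoundary G D := by
  have hwalk : ∀ p ∈ S, ∀ q ∈ S, ∃ F : Set (V × V), F.Finite ∧
      ∀ D : Set V, p ∈ D → q ∉ D → ∃ e ∈ F, e ∈ edgeBoundary G D := by
    intro p hp q hq
    obtain ⟨W⟩ := hreach p hp q hq
    refine ⟨Dart.toProd '' {d | d ∈ W.darts}, W.darts.finite_toSet.image _,
      fun D hpD hqD => ?_⟩
    obtain ⟨d, hd, hd₁, hd₂⟩ := W.exists_boundary_dart D hpD hqD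
    exact ⟨d.toProd, ⟨d, hd, rfl⟩, d.adj, hd₁, hd₂⟩
  choose! F hFfin hF using hwalk
  refine ⟨⋃ p ∈ S, ⋃ q ∈ S, F p q,
    hS.biUnion fun p hp => hS.biUnion fun q hq => hFfin p hp q hq, ?_⟩
  intro D p hp q hq hpD hqD
  obtain ⟨e, he, heD⟩ := hF p hp q hq D hpD hqD
  exact ⟨e, Set.mem_biUnion hp (Set.mem_biUnion hq he), heD⟩

theorem subset_setOf_reachable_deleteEdges {D : Set V} (hD : (G.induce D).Preconnected)
    {u : V} (hu : u ∈ D) {M : Set (Sym2 V)} (hM : ∀ e ∈ M, ∃ x ∈ e, x ∉ D) :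
    D ⊆ {w | (G.deleteEdges M).Reachable u w} := by
  let f : G.induce D →g G.deleteEdges M :=
    ⟨Subtype.val, fun {x y} hxy => deleteEdges_adj.2 ⟨hxy, fun hxyM => by
      obtain ⟨z, hz, hzD⟩ := hM _ hxyM
      rcases Sym2.mem_iff.1 hz with rfl | rfl
      exacts [hzD x.2, hzD y.2]⟩⟩
  exact fun w hw => (hD ⟨u, hu⟩ ⟨w, hw⟩).map f

theorem eq_setOf_reachable_deleteEdges {D : Set V} (hD : IsCut G D) {u v : V} (hu : u ∈ D)
    (hv : v ∉ D) {F : Set (V × V)} (hF : F ⊆ edgeBoundary G D)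
    (huv : ¬ (G.deleteEdges (Function.uncurry Sym2.mk '' F)).Reachable u v) :
    D = {w | (G.deleteEdges (Function.uncurry Sym2.mk '' F)).Reachable u w} := by
  have hDu := subset_setOf_reachable_deleteEdges hD.2.2.1.preconnected hu
    (M := Function.uncurry Sym2.mk '' F) (by
      rintro _ ⟨e, he, rfl⟩
      exact ⟨e.2, Sym2.mem_mk_right _ _, (hF he).2.2⟩)
  have hDv := subset_setOf_reachable_deleteEdges hD.2.2.2.1.preconnected hv
    (M := Function.uncurry Sym2.mk '' F) (by
      rintro _ ⟨e, he, rfl⟩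
      exact ⟨e.1, Sym2.mem_mk_left _ _, fun h => h (hF he).2.1⟩)
  refine hDu.antisymm fun w huw => ?_
  by_contra hw
  exact huv (huw.trans (hDv hw).symm)

theorem finite_setOf_isCutLe_mem_edgeBoundary (G : SimpleGraph V) (k : ℕ) (u v : V) :
    {D : Set V | IsCutLe G k D ∧ (u, v) ∈ edgeBoundary G D}.Finite := by
  set 𝒟 := {D : Set V | IsCutLe G k D ∧ (u, v) ∈ edgeBoundary G D}
  by_contra h𝒟
  have := Set.Infinite.cofinite_inf_principal_neBot h𝒟
  obtain ⟨U, hU⟩ := Filter.exists_ultrafilter_le (Filter.cofinite ⊓ Filter.principal 𝒟)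
  have h𝒟U : ∀ᶠ D in U, D ∈ 𝒟 :=
    hU (Filter.mem_inf_of_right (Filter.mem_principal_self 𝒟))
  set F := {e | ∀ᶠ D in U, e ∈ edgeBoundary G D}
  have hF : F.Finite :=
    Filter.finite_setOf_eventually_mem (h𝒟U.mono fun D hD => ⟨hD.1.1.2.2.2.2, hD.1.2⟩)
  set G' := G.deleteEdges (Function.uncurry Sym2.mk '' F)
  by_cases huv : G'.Reachable u v
  · obtain ⟨p⟩ := huv
    have hp : ∀ᶠ D in U, ∀ d ∈ p.darts, d.toProd ∉ edgeBoundary G D := by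
      refine (Filter.eventually_all_finite p.darts.finite_toSet).2 fun d _ => ?_
      refine Ultrafilter.eventually_not.2 fun hdF => (deleteEdges_adj.1 d.adj).2 ?_
      exact ⟨d.toProd, hdF, rfl⟩
    obtain ⟨D, hD, hpD⟩ := (h𝒟U.and hp).exists
    obtain ⟨d, hd, hd₁, hd₂⟩ := p.exists_boundary_dart D hD.2.2.1 hD.2.2.2
    exact hpD d hd ⟨(deleteEdges_adj.1 d.adj).1, hd₁, hd₂⟩
  · have hFD : ∀ᶠ D in U, F ⊆ edgeBoundary G D :=
      (Filter.eventually_all_finite hF).2 fun _ he => he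
    have hDeq : ∀ᶠ D in U, D = {w | G'.Reachable u w} :=
      (h𝒟U.and hFD).mono fun D ⟨hD, hFD⟩ =>
        eq_setOf_reachable_deleteEdges hD.1.1 hD.2.2.1 hD.2.2.2 hFD huv
    have hne : ∀ᶠ D in U, D ∉ ({{w | G'.Reachable u w}} : Set (Set V)) :=
      hU (Filter.mem_inf_of_left (Set.finite_singleton _).compl_mem_cofinite)
    obtain ⟨D, hD, hD'⟩ := (hDeq.and hne).exists
    exact hD' hD

end CFGroups

open CFGroups in
theorem finitely_many_kCuts_not_nested_general
    {V : Type u} (G : SimpleGraph V)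
    (k : ℕ) (C : Set V) (hC : CFGroups.IsCut G C) :
    {D : Set V | CFGroups.IsCutLe G k D ∧ ¬ CFGroups.Nested C D}.Finite := by
  have hreach : ∀ p ∈ Prod.fst '' edgeBoundary G C, ∀ q ∈ Prod.fst '' edgeBoundary G C,
      G.Reachable p q := by
    rintro _ ⟨p, hp, rfl⟩ _ ⟨q, hq, rfl⟩
    exact (hC.2.2.1.preconnected ⟨_, hp.2.1⟩ ⟨_, hq.2.1⟩).map
      (SimpleGraph.Embedding.induce C).toHom
  obtain ⟨F, hF, hFD⟩ :=
    exists_finite_forall_exists_mem_edgeBoundary (hC.2.2.2.2.image Prod.fst) hreach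
  refine (hF.biUnion fun e _ => finite_setOf_isCutLe_mem_edgeBoundary G k e.1 e.2).subset ?_
  rintro D ⟨hD, hCD⟩
  obtain ⟨p, hp, q, hq, hpD, hqD⟩ :=
    exists_fst_edgeBoundary_mem_not_mem_of_not_nested hD.1 hCD
  obtain ⟨e, heF, heD⟩ := hFD D p hp q hq hpD hqD
  exact Set.mem_biUnion heF ⟨hD, heD⟩

open CFGroups in
/-- In a connected, locally finite graph, for any cut `C` and any `k`,
only finitely many `k`-cuts are not nested with `C`. -/
theorem finitely_many_kCuts_not_nested
    {V : Type u} (G : SimpleGraph V) (hconn : G.Connected)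
    (hlf : CFGroups.LocallyFiniteGraph G)
    (k : ℕ) (C : Set V) (hC : CFGroups.IsCut G C) :
    {D : Set V | CFGroups.IsCutLe G k D ∧ ¬ CFGroups.Nested C D}.Finite :=
  finitely_many_kCuts_not_nested_general G k C hC
end

section
/- Let Γ be a connected, locally finite, accessible graph and let C, D ∈ C_opt. Then the set {E ∈ C_opt : C ⊆ E ⊆ D} is finite. -/
open Pointwise

universe u

/-!
An optimal cut `E` of `C(α)` has minimal weight there, and accessibility provides a `k`-cut in
`C(α)`, so `E` is a `k`-cut. If `C ⊆ E ⊆ D`, then `E` contains a fixed vertex `c ∈ C` and avoids a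
fixed vertex `d ∉ D`. There are only finitely many `k`-cuts separating `c` from `d`: by induction
on `k`, every such cut of positive weight has an edge of a fixed `c`–`d` walk in its boundary, and
deleting that edge turns it into a `(k - 1)`-cut separating `c` from `d` in a smaller graph.
-/

namespace CFGroups

open SimpleGraph

variable {V : Type u} {G : SimpleGraph V}

def separatingCuts (G : SimpleGraph V) (k : ℕ) (c d : V) : Set (Set V) :=
  {S | IsCutLe G k S ∧ c ∈ S ∧ d ∉ S}

lemma reachable_of_induce_connected {S : Set V} {u v : V} (h : (G.induce S).Connected)
    (hu : u ∈ S) (hv : v ∈ S) : G.Reachable u v :=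
  (h.preconnected ⟨u, hu⟩ ⟨v, hv⟩).map (Embedding.induce S).toHom

lemma mem_edgeBoundary_of_mem_darts {S : Set V} {u v : V} (W : G.Walk u v) (hu : u ∈ S)
    (hv : v ∉ S) : ∃ e ∈ W.darts, (e.fst, e.snd) ∈ edgeBoundary G S := by
  obtain ⟨e, he, hfst, hsnd⟩ := W.exists_boundary_dart S hu hv
  exact ⟨e, he, e.adj, hfst, hsnd⟩

lemma edgeBoundary_nonempty_of_reachable {S : Set V} {u v : V} (h : G.Reachable u v)
    (hu : u ∈ S) (hv : v ∉ S) : (edgeBoundary G S).Nonempty :=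
  let ⟨W⟩ := h
  let ⟨_, _, he⟩ := mem_edgeBoundary_of_mem_darts W hu hv
  ⟨_, he⟩

lemma IsCut.reachable_of_edgeBoundary_nonempty {S : Set V} {c d : V} (hS : IsCut G S)
    (hc : c ∈ S) (hd : d ∉ S) (hne : (edgeBoundary G S).Nonempty) : G.Reachable c d := by
  obtain ⟨⟨x, y⟩, hxy, hx, hy⟩ := hne
  exact ((reachable_of_induce_connected hS.2.2.1 hc hx).trans hxy.reachable).trans
    (reachable_of_induce_connected hS.2.2.2.1 hy hd)

lemma IsCut.edgeBoundary_eq_empty_of_weight_eq_zero {S : Set V} (hS : IsCut G S)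
    (h : weight G S = 0) : edgeBoundary G S = ∅ :=
  (Set.ncard_eq_zero hS.2.2.2.2).mp h

lemma induce_deleteEdges_of_notMem {T : Set V} {x y : V} (h : x ∉ T ∨ y ∉ T) :
    (G.deleteEdges {s(x, y)}).induce T = G.induce T := by
  ext a b
  simp only [comap_adj, deleteEdges_adj, Set.mem_singleton_iff, and_iff_left_iff_imp]
  intro _ hab
  rcases Sym2.eq_iff.mp hab with ⟨rfl, rfl⟩ | ⟨rfl, rfl⟩ <;> simp_all

lemma edgeBoundary_deleteEdges {S : Set V} {x y : V} (hx : x ∈ S) (hy : y ∉ S) :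
    edgeBoundary (G.deleteEdges {s(x, y)}) S = edgeBoundary G S \ {(x, y)} := by
  ext ⟨a, b⟩
  simp only [edgeBoundary, Set.mem_ofPred_eq, deleteEdges_adj, Set.mem_singleton_iff,
    Set.mem_sdiff, Sym2.eq_iff, Prod.mk.injEq]
  constructor
  · rintro ⟨⟨hab, hne⟩, ha, hb⟩
    exact ⟨⟨hab, ha, hb⟩, fun h => hne (Or.inl h)⟩
  · rintro ⟨⟨hab, ha, hb⟩, hne⟩
    refine ⟨⟨hab, ?_⟩, ha, hb⟩
    rintro (h | ⟨rfl, rfl⟩)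
    exacts [hne h, hb hx]

lemma IsCutLe.deleteEdges {k : ℕ} {S : Set V} {x y : V} (hS : IsCutLe G (k + 1) S)
    (hxy : (x, y) ∈ edgeBoundary G S) : IsCutLe (G.deleteEdges {s(x, y)}) k S := by
  obtain ⟨⟨hne, hcne, hconn, hcconn, hfin⟩, hw⟩ := hS
  have hx : x ∈ S := hxy.2.1
  have hy : y ∉ S := hxy.2.2
  refine ⟨⟨hne, hcne, ?_, ?_, ?_⟩, ?_⟩
  · rwa [induce_deleteEdges_of_notMem (Or.inr hy)]
  · rwa [induce_deleteEdges_of_notMem (Or.inl (Set.notMem_compl_iff.mpr hx))]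
  · rw [edgeBoundary_deleteEdges hx hy]
    exact hfin.sdiff
  · rw [weight, edgeBoundary_deleteEdges hx hy, Set.ncard_sdiff_singleton_of_mem hxy]
    exact Nat.sub_le_of_le_add hw

lemma separatingCuts_zero_subsingleton (c d : V) : (separatingCuts G 0 c d).Subsingleton := by
  suffices key : ∀ S ∈ separatingCuts G 0 c d, ∀ T ∈ separatingCuts G 0 c d, S ⊆ T from
    fun S hS T hT => (key S hS T hT).antisymm (key T hT S hS)
  rintro S ⟨⟨hS, hSw⟩, -, hdS⟩ T ⟨⟨hT, -⟩, -, hdT⟩ u hu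
  by_contra huT
  have hud : G.Reachable u d := reachable_of_induce_connected hT.2.2.2.1 huT hdT
  have hbd := edgeBoundary_nonempty_of_reachable hud hu hdS
  rw [hS.edgeBoundary_eq_empty_of_weight_eq_zero (Nat.le_zero.mp hSw)] at hbd
  exact Set.not_nonempty_empty hbd

lemma separatingCuts_succ_subset {k : ℕ} {c d : V} (W : G.Walk c d) :
    separatingCuts G (k + 1) c d ⊆
      separatingCuts G k c d ∪
        ⋃ e ∈ W.darts, separatingCuts (G.deleteEdges {s(e.fst, e.snd)}) k c d := by
  rintro S ⟨hS, hc, hd⟩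
  by_cases hw : weight G S ≤ k
  · exact Or.inl ⟨⟨hS.1, hw⟩, hc, hd⟩
  · obtain ⟨e, he, heS⟩ := mem_edgeBoundary_of_mem_darts W hc hd
    exact Or.inr (Set.mem_biUnion he ⟨hS.deleteEdges heS, hc, hd⟩)

lemma separatingCuts_succ_subset_of_not_reachable {k : ℕ} {c d : V} (h : ¬G.Reachable c d) :
    separatingCuts G (k + 1) c d ⊆ separatingCuts G k c d := by
  rintro S ⟨⟨hS, -⟩, hc, hd⟩
  have hempty : edgeBoundary G S = ∅ := Set.not_nonempty_iff_eq_empty.mp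
    fun hne => h (hS.reachable_of_edgeBoundary_nonempty hc hd hne)
  exact ⟨⟨hS, by simp [weight, hempty]⟩, hc, hd⟩

theorem separatingCuts_finite (G : SimpleGraph V) (k : ℕ) (c d : V) :
    (separatingCuts G k c d).Finite := by
  induction k generalizing G with
  | zero => exact (separatingCuts_zero_subsingleton c d).finite
  | succ k ih =>
    by_cases hr : G.Reachable c d
    · obtain ⟨W⟩ := hr
      exact ((ih G).union (W.darts.finite_toSet.biUnion fun _ _ => ih _)).subset
        (separatingCuts_succ_subset W)
    · exact (ih G).subset (separatingCuts_succ_subset_of_not_reachable hr)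

lemma AccessibleWith.isCutLe_of_mem_COpt {k : ℕ} (hacc : AccessibleWith G k) {E : Set V}
    (hE : E ∈ COpt G k) : IsCutLe G k E := by
  obtain ⟨α, hα, ⟨hEsplit, hEmin⟩, -⟩ := hE
  obtain ⟨E', hE'split, hE'w⟩ := hacc α hα ⟨E, hEsplit⟩
  exact ⟨hEsplit.1, (hEmin E' hE'split).trans hE'w⟩

lemma isCut_of_mem_COpt {k : ℕ} {E : Set V} (hE : E ∈ COpt G k) : IsCut G E :=
  let ⟨_, _, hEopt⟩ := hE
  hEopt.1.1.1

end CFGroups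

open CFGroups in
theorem finitely_many_optimal_cuts_between_general
    {V : Type u} (G : SimpleGraph V)
    (k : ℕ) (hacc : CFGroups.AccessibleWith G k)
    (C D : Set V) (hC : C ∈ CFGroups.COpt G k) (hD : D ∈ CFGroups.COpt G k) :
    {E : Set V | E ∈ CFGroups.COpt G k ∧ C ⊆ E ∧ E ⊆ D}.Finite := by
  obtain ⟨c, hc⟩ := (isCut_of_mem_COpt hC).1
  obtain ⟨d, hd⟩ := (isCut_of_mem_COpt hD).2.1
  refine (separatingCuts_finite G k c d).subset ?_
  rintro E ⟨hE, hCE, hED⟩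
  exact ⟨hacc.isCutLe_of_mem_COpt hE, hCE hc, fun hdE => hd (hED hdE)⟩

open CFGroups in
/-- In a connected, locally finite, accessible graph (with accessibility
constant `k` fixed), for optimal cuts `C, D` the set `{E ∈ C_opt : C ⊆ E ⊆ D}` is finite. -/
theorem finitely_many_optimal_cuts_between
    {V : Type u} (G : SimpleGraph V) (hconn : G.Connected)
    (hlf : CFGroups.LocallyFiniteGraph G)
    (k : ℕ) (hacc : CFGroups.AccessibleWith G k)
    (C D : Set V) (hC : C ∈ CFGroups.COpt G k) (hD : D ∈ CFGroups.COpt G k) :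
    {E : Set V | E ∈ CFGroups.COpt G k ∧ C ⊆ E ∧ E ⊆ D}.Finite :=
  finitely_many_optimal_cuts_between_general G k hacc C D hC hD
end
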